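/- Mollification preserves variable Hölder regularity up to a loss δ in the exponent: let Ω_T ⊂ R^{n+1} be bounded, σ > 0, α log-Hölder continuous on the σ-neighborhood Ω_{T,σ}. Then for every δ ∈ (0, α⁻) there exists ε' > 0 such that for all ε ≤ ε' and all f ∈ C^{α(·)}(Ω̄_{T,σ}), the mollification f_ε = f * φ_ε satisfies |f_ε|_{0,α(·)-δ, Ω_T} ≤ 3 |f|_{0,α(·),Ω_{T,σ}}. -/
import Mathlib


open Real Set MeasureTheory

/-- The parabolic distance on `ℝⁿ × ℝ`. -/
noncomputable def pd {n : ℕ} (P Q : (Fin n → ℝ) × ℝ) : ℝ :=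
  max ‖P.1 - Q.1‖ (Real.sqrt |P.2 - Q.2|)

/-- Variable Hölder seminorm with exponent `β(·)` at the first point. -/
noncomputable def pSemi {n : ℕ} (β : (Fin n → ℝ) × ℝ → ℝ) (U : Set ((Fin n → ℝ) × ℝ))
    (u : (Fin n → ℝ) × ℝ → ℝ) : ℝ :=
  sSup {q | ∃ X ∈ U, ∃ Y ∈ U, X ≠ Y ∧ q = |u X - u Y| / pd X Y ^ β X}

/-- The norm `|u|_{0,β(·),U}`. -/
noncomputable def pNorm {n : ℕ} (β : (Fin n → ℝ) × ℝ → ℝ) (U : Set ((Fin n → ℝ) × ℝ))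
    (u : (Fin n → ℝ) × ℝ → ℝ) : ℝ :=
  sSup ((fun X => |u X|) '' U) + pSemi β U u

lemma pd_nonneg {n : ℕ} (P Q : (Fin n → ℝ) × ℝ) : 0 ≤ pd P Q :=
  le_trans (norm_nonneg _) (le_max_left _ _)

lemma pd_pos {n : ℕ} {P Q : (Fin n → ℝ) × ℝ} (h : P ≠ Q) : 0 < pd P Q := by
  rcases lt_or_eq_of_le (pd_nonneg P Q) with h1 | h1
  · exact h1
  · exfalso
    apply h
    have h2 : ‖P.1 - Q.1‖ ≤ 0 := h1 ▸ le_max_left _ _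
    have h3 : Real.sqrt |P.2 - Q.2| ≤ 0 := h1 ▸ le_max_right _ _
    have hfst : P.1 = Q.1 := by
      have := le_antisymm h2 (norm_nonneg _)
      rwa [norm_sub_eq_zero_iff] at this
    have hsnd : P.2 = Q.2 := by
      have h5 := (Real.sqrt_eq_zero (abs_nonneg _)).mp (le_antisymm h3 (Real.sqrt_nonneg _))
      have h6 := abs_eq_zero.mp h5
      linarith [sub_eq_zero.mp h6]
    exact Prod.ext hfst hsnd

lemma pd_sub_right {n : ℕ} (P Q z : (Fin n → ℝ) × ℝ) : pd (P - z) (Q - z) = pd P Q := by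
  simp [pd, Prod.fst_sub, Prod.snd_sub, sub_sub_sub_cancel_right]

lemma pd_self {n : ℕ} (P : (Fin n → ℝ) × ℝ) : pd P P = 0 := by
  simp [pd]

lemma pd_sub_self {n : ℕ} (P z : (Fin n → ℝ) × ℝ) :
    pd (P - z) P = max ‖z.1‖ (Real.sqrt |z.2|) := by
  simp [pd, Prod.fst_sub, Prod.snd_sub, norm_sub_rev, abs_sub_comm]

/-- Mollification preserves variable Hölder regularity up to a loss `δ` in the
exponent: with `Ω_{T,σ}` the `σ`-neighborhood of `Ω_T` in the parabolic metric,
`α` log-Hölder on `Ω_{T,σ}` with values in `[α⁻,1]`, `φ` the standard mollifier on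
`ℝⁿ × ℝ`, then for every `δ ∈ (0,α⁻)` there is `ε' > 0` such that for `0 < ε ≤ ε'`
and `f ∈ C^{α(·)}(Ω̄_{T,σ})`, `|f_ε|_{0,α(·)-δ,Ω_T} ≤ 3 |f|_{0,α(·),Ω_{T,σ}}`. -/
theorem mollification_variable_holder (n : ℕ) (ΩT : Set ((Fin n → ℝ) × ℝ))
    (hΩ : Bornology.IsBounded ΩT) (σ : ℝ) (hσ : 0 < σ)
    (α : (Fin n → ℝ) × ℝ → ℝ) (αm : ℝ) (hαm : 0 < αm)
    (hα : ∀ X ∈ {X | ∃ Y ∈ ΩT, pd X Y < σ}, αm ≤ α X ∧ α X ≤ 1)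
    (M : ℝ) (hM : 0 < M)
    (hlog : ∀ X ∈ {X | ∃ Y ∈ ΩT, pd X Y < σ}, ∀ Y ∈ {X | ∃ Y ∈ ΩT, pd X Y < σ},
      X ≠ Y → |α X - α Y| * |Real.log (pd X Y)| ≤ M)
    (φ : (Fin n → ℝ) × ℝ → ℝ) (hφs : ContDiff ℝ (⊤ : ℕ∞) φ) (hφ0 : ∀ z, 0 ≤ φ z)
    (hφsupp : Function.support φ ⊆ Metric.ball 0 1) (hφint : ∫ z, φ z = 1) :
    ∀ δ : ℝ, 0 < δ → δ < αm →
      ∃ ε' > (0:ℝ), ∀ ε : ℝ, 0 < ε → ε ≤ ε' →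
        ∀ f : (Fin n → ℝ) × ℝ → ℝ, Continuous f →
          BddAbove ((fun X => |f X|) '' {X | ∃ Y ∈ ΩT, pd X Y < σ}) →
          BddAbove {q | ∃ X ∈ {X | ∃ Y ∈ ΩT, pd X Y < σ},
            ∃ Y ∈ {X | ∃ Y ∈ ΩT, pd X Y < σ}, X ≠ Y ∧
              q = |f X - f Y| / pd X Y ^ α X} →
          pNorm (fun X => α X - δ) ΩT
              (fun X => ∫ z, ε ^ (-((n : ℝ) + 1)) * φ (ε⁻¹ • z) * f (X - z)) ≤
            3 * pNorm α {X | ∃ Y ∈ ΩT, pd X Y < σ} f := by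
  intro δ hδ0 hδαm
  set N : Set ((Fin n → ℝ) × ℝ) := {X | ∃ Y ∈ ΩT, pd X Y < σ} with hNdef
  refine ⟨min (σ ^ 2 / 4) (min (1 / 4) (Real.exp (-(M / δ)) ^ 2)), by positivity, ?_⟩
  intro ε hε0 hεle f hf hb1 hb2
  -- basic bounds on √ε
  have hε14 : ε ≤ 1 / 4 :=
    le_trans hεle (le_trans (min_le_right _ _) (min_le_left _ _))
  have hεσ : ε ≤ σ ^ 2 / 4 := le_trans hεle (min_le_left _ _)
  have hεexp : ε ≤ Real.exp (-(M / δ)) ^ 2 :=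
    le_trans hεle (le_trans (min_le_right _ _) (min_le_right _ _))
  have hr0 : 0 < Real.sqrt ε := Real.sqrt_pos.mpr hε0
  have hrσ : Real.sqrt ε < σ := by
    have h1 : Real.sqrt ε ≤ Real.sqrt ((σ / 2) ^ 2) := Real.sqrt_le_sqrt (by nlinarith)
    rw [Real.sqrt_sq (by positivity)] at h1
    linarith
  have hr1 : Real.sqrt ε ≤ 1 / 2 := by
    have h1 : Real.sqrt ε ≤ Real.sqrt ((1 / 2 : ℝ) ^ 2) := Real.sqrt_le_sqrt (by nlinarith)
    rw [Real.sqrt_sq (by norm_num)] at h1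
    exact h1
  have hrexp : Real.sqrt ε ≤ Real.exp (-(M / δ)) := by
    have h1 : Real.sqrt ε ≤ Real.sqrt (Real.exp (-(M / δ)) ^ 2) := Real.sqrt_le_sqrt hεexp
    rwa [Real.sqrt_sq (Real.exp_pos _).le] at h1
  have hεr : ε ≤ Real.sqrt ε := by
    nlinarith [Real.sq_sqrt hε0.le, Real.sqrt_nonneg ε]
  have hΩN : ΩT ⊆ N := fun X hX => ⟨X, hX, by simp [pd_self, hσ]⟩
  -- points shifted by small z stay in N
  have hpdz : ∀ (X z : (Fin n → ℝ) × ℝ), ‖z‖ < ε → pd (X - z) X ≤ Real.sqrt ε := by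
    intro X z hz
    rw [pd_sub_self]
    apply max_le
    · calc ‖z.1‖ ≤ ‖z‖ := norm_fst_le z
        _ ≤ Real.sqrt ε := le_trans hz.le hεr
    · apply Real.sqrt_le_sqrt
      calc |z.2| = ‖z.2‖ := rfl
        _ ≤ ‖z‖ := norm_snd_le z
        _ ≤ ε := hz.le
  have hmem : ∀ X ∈ ΩT, ∀ z : (Fin n → ℝ) × ℝ, ‖z‖ < ε → X - z ∈ N := by
    intro X hX z hz
    exact ⟨X, hX, lt_of_le_of_lt (hpdz X z hz) hrσ⟩
  -- exponent comparison
  have hαz : ∀ X ∈ ΩT, ∀ z : (Fin n → ℝ) × ℝ, ‖z‖ < ε → α X - δ ≤ α (X - z) := by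
    intro X hX z hz
    by_cases hzz : X - z = X
    · rw [hzz]; linarith
    · have hXN : X ∈ N := hΩN hX
      have hXzN : X - z ∈ N := hmem X hX z hz
      have hlog' := hlog (X - z) hXzN X hXN hzz
      have hpdpos : 0 < pd (X - z) X := pd_pos hzz
      have hpdle : pd (X - z) X ≤ Real.exp (-(M / δ)) := le_trans (hpdz X z hz) hrexp
      have hlogle : Real.log (pd (X - z) X) ≤ -(M / δ) := by
        calc Real.log (pd (X - z) X) ≤ Real.log (Real.exp (-(M / δ))) :=
              Real.log_le_log hpdpos hpdle
          _ = -(M / δ) := Real.log_exp _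
      have hMδ : 0 < M / δ := div_pos hM hδ0
      have habslog : M / δ ≤ |Real.log (pd (X - z) X)| :=
        le_abs.mpr (Or.inr (by linarith))
      have h5 : |α (X - z) - α X| * (M / δ) ≤ M :=
        le_trans (mul_le_mul_of_nonneg_left habslog (abs_nonneg _)) hlog'
      have h6 : |α (X - z) - α X| ≤ δ := by
        have h5' : |α (X - z) - α X| ≤ M / (M / δ) := (le_div_iff₀ hMδ).mpr h5
        rwa [show M / (M / δ) = δ by field_simp] at h5'
      have h7 := abs_le.mp h6
      linarith [h7.1]
  -- the mollifier kernel
  set ψ : (Fin n → ℝ) × ℝ → ℝ := fun z => ε ^ (-((n : ℝ) + 1)) * φ (ε⁻¹ • z) with hψdef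
  have hc0 : (0:ℝ) < ε ^ (-((n : ℝ) + 1)) := Real.rpow_pos_of_pos hε0 _
  have hψ0 : ∀ z, 0 ≤ ψ z := fun z => mul_nonneg hc0.le (hφ0 _)
  have hψzero : ∀ z : (Fin n → ℝ) × ℝ, ε ≤ ‖z‖ → ψ z = 0 := by
    intro z hz
    have h1 : φ (ε⁻¹ • z) = 0 := by
      by_contra h
      have h2 : ε⁻¹ • z ∈ Metric.ball (0 : (Fin n → ℝ) × ℝ) 1 := hφsupp h
      rw [mem_ball_zero_iff, norm_smul, norm_inv, Real.norm_eq_abs,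
        abs_of_pos hε0] at h2
      have h3 : ε⁻¹ * ε ≤ ε⁻¹ * ‖z‖ :=
        mul_le_mul_of_nonneg_left hz (inv_nonneg.mpr hε0.le)
      rw [inv_mul_cancel₀ hε0.ne'] at h3
      linarith
    simp [hψdef, h1]
  have hψcont : Continuous ψ :=
    continuous_const.mul (hφs.continuous.comp (continuous_const_smul ε⁻¹))
  have hψcs : HasCompactSupport ψ := by
    apply HasCompactSupport.intro (isCompact_closedBall (0 : (Fin n → ℝ) × ℝ) ε)
    intro z hz
    rw [Metric.mem_closedBall, dist_zero_right, not_le] at hz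
    exact hψzero z hz.le
  have hψint : Integrable ψ := hψcont.integrable_of_hasCompactSupport hψcs
  haveI hHaar : Measure.IsAddHaarMeasure (volume : Measure ((Fin n → ℝ) × ℝ)) := by
    have hvol : (volume : Measure ((Fin n → ℝ) × ℝ)) =
        (volume : Measure (Fin n → ℝ)).prod volume := rfl
    rw [hvol]; infer_instance
  have hψone : ∫ z, ψ z = 1 := by
    have h1 : ∫ z, ψ z = ε ^ (-((n : ℝ) + 1)) * ∫ z, φ (ε⁻¹ • z) := by
      rw [hψdef]; exact integral_const_mul _ _
    have h2 : ∫ z, φ (ε⁻¹ • z) =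
        ε ^ (Module.finrank ℝ ((Fin n → ℝ) × ℝ)) • ∫ z, φ z :=
      Measure.integral_comp_inv_smul_of_nonneg volume φ hε0.le
    have hfr : Module.finrank ℝ ((Fin n → ℝ) × ℝ) = n + 1 := by
      simp [Module.finrank_prod]
    rw [h1, h2, hfr, hφint, smul_eq_mul, mul_one]
    rw [← Real.rpow_natCast ε (n + 1), ← Real.rpow_add hε0]
    push_cast
    rw [show -((n : ℝ) + 1) + ((n : ℝ) + 1) = 0 by ring, Real.rpow_zero]
  -- integrability of the integrand
  have hint : ∀ X : (Fin n → ℝ) × ℝ, Integrable (fun z => ψ z * f (X - z)) := by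
    intro X
    apply Continuous.integrable_of_hasCompactSupport
    · exact hψcont.mul (hf.comp (continuous_const.sub continuous_id))
    · apply HasCompactSupport.intro (isCompact_closedBall (0 : (Fin n → ℝ) × ℝ) ε)
      intro z hz
      rw [Metric.mem_closedBall, dist_zero_right, not_le] at hz
      rw [hψzero z hz.le, zero_mul]
  -- sup and seminorm of f
  set S : ℝ := sSup ((fun X => |f X|) '' N) with hSdef
  set H : ℝ := sSup {q | ∃ X ∈ N, ∃ Y ∈ N, X ≠ Y ∧ q = |f X - f Y| / pd X Y ^ α X} with hHdef
  have hS0 : 0 ≤ S := Real.sSup_nonneg (by rintro q ⟨X, _, rfl⟩; positivity)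
  have hH0 : 0 ≤ H := by
    apply Real.sSup_nonneg
    rintro q ⟨X, _, Y, _, hXY, rfl⟩
    exact div_nonneg (abs_nonneg _) (Real.rpow_nonneg (pd_nonneg _ _) _)
  have hfS : ∀ X ∈ N, |f X| ≤ S := fun X hX => le_csSup hb1 ⟨X, hX, rfl⟩
  have hfH : ∀ X ∈ N, ∀ Y ∈ N, X ≠ Y → |f X - f Y| ≤ H * pd X Y ^ α X := by
    intro X hX Y hY hXY
    have h1 : |f X - f Y| / pd X Y ^ α X ≤ H := le_csSup hb2 ⟨X, hX, Y, hY, hXY, rfl⟩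
    rwa [div_le_iff₀ (Real.rpow_pos_of_pos (pd_pos hXY) _)] at h1
  -- the mollified function
  set g : (Fin n → ℝ) × ℝ → ℝ := fun X => ∫ z, ψ z * f (X - z) with hgdef
  show pNorm (fun X => α X - δ) ΩT g ≤ 3 * pNorm α N f
  -- sup bound
  have hA : ∀ X ∈ ΩT, |g X| ≤ S := by
    intro X hX
    have h1 : ‖∫ z, ψ z * f (X - z)‖ ≤ ∫ z, ψ z * S := by
      apply norm_integral_le_of_norm_le (hψint.mul_const S)
      apply Filter.Eventually.of_forall
      intro z
      rw [Real.norm_eq_abs, abs_mul, abs_of_nonneg (hψ0 z)]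
      by_cases hz : ε ≤ ‖z‖
      · simp [hψzero z hz]
      · push_neg at hz
        exact mul_le_mul_of_nonneg_left (hfS (X - z) (hmem X hX z hz)) (hψ0 z)
    rw [integral_mul_const, hψone, one_mul] at h1
    exact h1
  -- seminorm bound for close points
  have hB : ∀ X ∈ ΩT, ∀ Y ∈ ΩT, X ≠ Y → pd X Y < 1 →
      |g X - g Y| ≤ H * pd X Y ^ (α X - δ) := by
    intro X hX Y hY hXY hlt
    have hsub : g X - g Y = ∫ z, ψ z * (f (X - z) - f (Y - z)) := by
      rw [hgdef]
      rw [← integral_sub (hint X) (hint Y)]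
      congr 1
      ext z
      ring
    have h1 : ‖∫ z, ψ z * (f (X - z) - f (Y - z))‖ ≤
        ∫ z, ψ z * (H * pd X Y ^ (α X - δ)) := by
      apply norm_integral_le_of_norm_le (hψint.mul_const _)
      apply Filter.Eventually.of_forall
      intro z
      rw [Real.norm_eq_abs, abs_mul, abs_of_nonneg (hψ0 z)]
      by_cases hz : ε ≤ ‖z‖
      · simp [hψzero z hz]
      · push_neg at hz
        apply mul_le_mul_of_nonneg_left _ (hψ0 z)
        have hne : X - z ≠ Y - z := fun h => hXY (by
          have := congrArg (· + z) h
          simpa using this)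
        have h2 : |f (X - z) - f (Y - z)| ≤ H * pd (X - z) (Y - z) ^ α (X - z) :=
          hfH _ (hmem X hX z hz) _ (hmem Y hY z hz) hne
        rw [pd_sub_right] at h2
        refine le_trans h2 (mul_le_mul_of_nonneg_left ?_ hH0)
        exact Real.rpow_le_rpow_of_exponent_ge (pd_pos hXY) hlt.le (hαz X hX z hz)
    rw [integral_mul_const, hψone, one_mul] at h1
    rw [hsub]
    exact h1
  -- assemble
  rw [pNorm, pNorm, pSemi, pSemi]
  have h1 : sSup ((fun X => |g X|) '' ΩT) ≤ S := by
    apply Real.sSup_le _ hS0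
    rintro q ⟨X, hX, rfl⟩
    exact hA X hX
  have h2 : sSup {q | ∃ X ∈ ΩT, ∃ Y ∈ ΩT, X ≠ Y ∧
      q = |g X - g Y| / pd X Y ^ ((fun X => α X - δ) X)} ≤ 2 * S + H := by
    apply Real.sSup_le _ (by linarith)
    rintro q ⟨X, hX, Y, hY, hXY, rfl⟩
    have he0 : 0 < α X - δ := by
      have := (hα X (hΩN hX)).1
      linarith
    by_cases hlt : pd X Y < 1
    · have h3 := hB X hX Y hY hXY hlt
      have h4 : |g X - g Y| / pd X Y ^ (α X - δ) ≤ H := by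
        rw [div_le_iff₀ (Real.rpow_pos_of_pos (pd_pos hXY) _)]
        exact h3
      simp only []
      linarith
    · push_neg at hlt
      have h5 : (1:ℝ) ≤ pd X Y ^ (α X - δ) := Real.one_le_rpow hlt he0.le
      have h6 : |g X - g Y| / pd X Y ^ (α X - δ) ≤ |g X - g Y| :=
        div_le_self (abs_nonneg _) h5
      have h7 : |g X - g Y| ≤ |g X| + |g Y| := abs_sub _ _
      have h8 := hA X hX
      have h9 := hA Y hY
      simp only []
      linarith
  have h3 : sSup ((fun X => |f X|) '' N) = S := rfl
  have h4 : sSup {q | ∃ X ∈ N, ∃ Y ∈ N, X ≠ Y ∧ q = |f X - f Y| / pd X Y ^ α X} = H := rfl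
  rw [h3, h4]
  linarith [le_trans (add_le_add h1 h2) (by linarith : S + (2 * S + H) ≤ 3 * (S + H))]
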